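/- arXiv:alg-geom/9711016 — 2 statements merged into one kernel-verified Lean document; each statement's English description precedes it below -/
import Mathlib

section
/- Let L ⊂ ℂ² be a complex affine line, let p ∈ ℂ², and let 0 < δ < ε. If p ∈ L, then the set {z ∈ ℂ² : ‖z − p‖ = ε and dist(z, L) = δ} is homeomorphic to the 2-torus S¹ × S¹. If dist(p, L) > ε + δ, then this set is empty. -/
open Metric Set Topology
open scoped InnerProductSpace ComplexConjugate

noncomputable section

/-- ℂ², with the Euclidean metric (identifying ℂ² with ℝ⁴). -/
abbrev C2 := EuclideanSpace ℂ (Fin 2)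

/-- A complex affine line in ℂ². -/
def IsComplexLine (L : Set C2) : Prop :=
  ∃ p v : C2, v ≠ 0 ∧ L = {z : C2 | ∃ t : ℂ, z = p + t • v}

/-- A finite arrangement of distinct complex affine lines in ℂ². -/
structure LineArrangement where
  lines : Finset (Set C2)
  isLine : ∀ L ∈ lines, IsComplexLine L

namespace LineArrangement

/-- The set 𝒫 of intersection points of the arrangement. -/
def pts (A : LineArrangement) : Set C2 :=
  {p : C2 | ∃ L ∈ A.lines, ∃ L' ∈ A.lines, L ≠ L' ∧ p ∈ L ∧ p ∈ L'}

/-- The union ℒ of the lines of the arrangement. -/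
def union (A : LineArrangement) : Set C2 := ⋃ L ∈ A.lines, L

/-- The complement E_ℒ = ℂ² ∖ ℒ. -/
def cmpl (A : LineArrangement) : Set C2 := (A.union)ᶜ

/-- The regular neighborhood N_ℒ(ε,δ). -/
def nbhd (A : LineArrangement) (ε δ : ℝ) : Set C2 :=
  (⋃ p ∈ A.pts, Metric.closedBall p ε) ∪
    (⋃ L ∈ A.lines, {z : C2 | Metric.infDist z L ≤ δ})

/-- The boundary manifold M_ℒ(ε,δ): the topological frontier of the regular
neighborhood in ℂ². -/
def bdry (A : LineArrangement) (ε δ : ℝ) : Set C2 := frontier (A.nbhd ε δ)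

end LineArrangement

/-- The real line y = a x + b, viewed as a complex line in ℂ². -/
def realLine (a b : ℝ) : Set C2 := {z : C2 | z 1 = (a : ℂ) * z 0 + (b : ℂ)}

def IsRealLine (L : Set C2) : Prop := ∃ a b : ℝ, L = realLine a b

/-- A real line arrangement. -/
def LineArrangement.IsReal (A : LineArrangement) : Prop := ∀ L ∈ A.lines, IsRealLine L

/-- The skeleton Σ_ℒ of a real line arrangement: the union over L ∈ 𝒜 of the
convex hull of the points of 𝒫 lying on L. -/
def LineArrangement.skeleton (A : LineArrangement) : Set C2 :=
  ⋃ L ∈ A.lines, convexHull ℝ (A.pts ∩ L)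

set_option maxHeartbeats 1000000 in
/-- For a complex affine line L, a point p with p ∈ L, and 0 < δ < ε,
the set {z : ‖z − p‖ = ε, dist(z, L) = δ} is homeomorphic to the 2-torus S¹ × S¹;
and if dist(p, L) > ε + δ then this set is empty. -/
theorem sphere_line_distance_torus
    (L : Set C2) (hline : IsComplexLine L) (p : C2) (ε δ : ℝ)
    (hδ : 0 < δ) (hδε : δ < ε) :
    (p ∈ L →
      Nonempty (↥{z : C2 | dist z p = ε ∧ Metric.infDist z L = δ} ≃ₜ (Circle × Circle))) ∧
    (Metric.infDist p L > ε + δ →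
      {z : C2 | dist z p = ε ∧ Metric.infDist z L = δ} = ∅) := by
  have hε : 0 < ε := hδ.trans hδε
  constructor
  · intro hp
    obtain ⟨q, v, hv, hLdef⟩ := hline
    obtain ⟨t₀, ht₀⟩ : ∃ t : ℂ, p = q + t • v := by rw [hLdef] at hp; exact hp
    set nv : ℝ := ‖v‖ with hnv
    have hnv0 : (0:ℝ) < nv := norm_pos_iff.2 hv
    have hnvC : (nv : ℂ) ≠ 0 := by exact_mod_cast hnv0.ne'
    obtain ⟨e, he_def⟩ : ∃ e : C2, e = ((nv:ℂ))⁻¹ • v := ⟨_, rfl⟩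
    have he : ‖e‖ = 1 := by
      rw [he_def, norm_smul, norm_inv, Complex.norm_real, Real.norm_eq_abs, abs_of_pos hnv0]
      field_simp
      exact hnv.symm
    have hvne : v = (nv:ℂ) • e := by
      rw [he_def, smul_smul, mul_inv_cancel₀ hnvC, one_smul]
    have hL' : L = {z : C2 | ∃ t : ℂ, z = p + t • e} := by
      rw [hLdef]; ext z; simp only [Set.mem_setOf_eq]
      constructor
      · rintro ⟨t, rfl⟩
        refine ⟨(t - t₀) * nv, ?_⟩
        rw [ht₀, hvne]
        module
      · rintro ⟨t, rfl⟩
        refine ⟨t₀ + t * (nv:ℂ)⁻¹, ?_⟩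
        have ht : t • e = (t * (nv:ℂ)⁻¹) • v := by rw [he_def, smul_smul]
        rw [ht₀, ht, add_smul]
        abel
    obtain ⟨w, hw_def⟩ : ∃ w : C2, w = WithLp.toLp 2 ![-(conj (e 1)), conj (e 0)] := ⟨_, rfl⟩
    have hw0 : w 0 = -(conj (e 1)) := by rw [hw_def]; rfl
    have hw1 : w 1 = conj (e 0) := by rw [hw_def]; rfl
    have h1 : conj (e 0) * e 0 + conj (e 1) * e 1 = 1 := by
      have h := inner_self_eq_norm_sq_to_K (𝕜 := ℂ) e
      rw [he] at h
      simp only [PiLp.inner_apply, Fin.sum_univ_two, RCLike.inner_apply'] at h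
      simpa using h
    have hee : ⟪e, e⟫_ℂ = 1 := by
      simp [PiLp.inner_apply, Fin.sum_univ_two, RCLike.inner_apply, h1, he]
    have hew : ⟪e, w⟫_ℂ = 0 := by
      simp only [PiLp.inner_apply, Fin.sum_univ_two, RCLike.inner_apply, hw0, hw1]
      ring
    have hww : ⟪w, w⟫_ℂ = 1 := by
      simp only [PiLp.inner_apply, Fin.sum_univ_two, RCLike.inner_apply, hw0, hw1, map_neg,
        Complex.conj_conj]
      linear_combination h1
    have hwnorm : ‖w‖ = 1 := by
      have h := @inner_self_eq_norm_sq ℂ _ _ _ _ w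
      rw [hww] at h
      have h2 : ‖w‖^2 = 1 := by simpa using h.symm
      have h3 := congrArg Real.sqrt h2
      rwa [Real.sqrt_sq (norm_nonneg _), Real.sqrt_one] at h3
    obtain ⟨a, ha_def⟩ : ∃ a : C2 → ℂ, a = fun z => ⟪e, z - p⟫_ℂ := ⟨_, rfl⟩
    obtain ⟨b, hb_def⟩ : ∃ b : C2 → ℂ, b = fun z => ⟪w, z - p⟫_ℂ := ⟨_, rfl⟩
    have hdec : ∀ z : C2, a z • e + b z • w = z - p := by
      intro z
      ext i
      fin_cases i
      · show (a z • e + b z • w) 0 = (z - p) 0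
        simp only [PiLp.add_apply, PiLp.smul_apply, PiLp.sub_apply, smul_eq_mul, ha_def, hb_def,
          PiLp.inner_apply, Fin.sum_univ_two, RCLike.inner_apply, hw0, hw1, map_neg,
          Complex.conj_conj]
        linear_combination (z 0 - p 0) * h1
      · show (a z • e + b z • w) 1 = (z - p) 1
        simp only [PiLp.add_apply, PiLp.smul_apply, PiLp.sub_apply, smul_eq_mul, ha_def, hb_def,
          PiLp.inner_apply, Fin.sum_univ_two, RCLike.inner_apply, hw0, hw1, map_neg,
          Complex.conj_conj]
        linear_combination (z 1 - p 1) * h1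
    have hnormc : ∀ α β : ℂ, ‖α • e + β • w‖^2 = ‖α‖^2 + ‖β‖^2 := by
      intro α β
      have hz : ⟪α • e, β • w⟫_ℂ = 0 := by
        rw [inner_smul_left, inner_smul_right, hew]
        ring
      rw [norm_add_sq_real, show ⟪α • e, β • w⟫_ℝ = RCLike.re ⟪α • e, β • w⟫_ℂ from
        real_inner_eq_re_inner ℂ _ _, hz, map_zero]
      rw [norm_smul, norm_smul, he, hwnorm, mul_one, mul_one]
      ring
    have hinf : ∀ z : C2, Metric.infDist z L = ‖b z‖ := by
      intro z
      apply le_antisymm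
      · have hy : p + a z • e ∈ L := by rw [hL']; exact ⟨a z, rfl⟩
        refine le_trans (Metric.infDist_le_dist_of_mem hy) ?_
        rw [dist_eq_norm]
        have hzz : z - (p + a z • e) = b z • w := by
          have h := hdec z
          calc z - (p + a z • e) = (z - p) - a z • e := by abel
            _ = (a z • e + b z • w) - a z • e := by rw [h]
            _ = b z • w := by abel
        rw [hzz, norm_smul, hwnorm, mul_one]
      · by_contra hcon
        push_neg at hcon
        obtain ⟨y, hy, hlt⟩ := (Metric.infDist_lt_iff ⟨p, hp⟩).1 hcon
        rw [hL'] at hy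
        obtain ⟨t, rfl⟩ := hy
        have hz : z - (p + t • e) = (a z - t) • e + b z • w := by
          have h := hdec z
          calc z - (p + t • e) = (z - p) - t • e := by abel
            _ = (a z • e + b z • w) - t • e := by rw [h]
            _ = (a z - t) • e + b z • w := by module
        rw [dist_eq_norm, hz] at hlt
        have h2 : ‖b z‖^2 ≤ ‖(a z - t) • e + b z • w‖^2 := by
          rw [hnormc]
          nlinarith [sq_nonneg ‖a z - t‖]
        have h3 := Real.sqrt_le_sqrt h2
        rw [Real.sqrt_sq (norm_nonneg _), Real.sqrt_sq (norm_nonneg _)] at h3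
        linarith
    obtain ⟨r, hr_def⟩ : ∃ r : ℝ, r = Real.sqrt (ε^2 - δ^2) := ⟨_, rfl⟩
    have hpos : 0 < ε^2 - δ^2 := by nlinarith
    have hr2 : r^2 = ε^2 - δ^2 := by rw [hr_def]; exact Real.sq_sqrt hpos.le
    have hr0 : 0 < r := by rw [hr_def]; exact Real.sqrt_pos.2 hpos
    have hS : ∀ z : C2, (dist z p = ε ∧ Metric.infDist z L = δ) ↔ (‖a z‖ = r ∧ ‖b z‖ = δ) := by
      intro z
      rw [hinf z]
      constructor
      · rintro ⟨h1', h2'⟩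
        refine ⟨?_, h2'⟩
        have hn : ‖z - p‖^2 = ε^2 := by rw [← dist_eq_norm, h1']
        rw [← hdec z, hnormc] at hn
        have ha2 : ‖a z‖^2 = r^2 := by rw [hr2]; nlinarith
        have h3 := congrArg Real.sqrt ha2
        rwa [Real.sqrt_sq (norm_nonneg _), Real.sqrt_sq hr0.le] at h3
      · rintro ⟨h1', h2'⟩
        refine ⟨?_, h2'⟩
        rw [dist_eq_norm]
        have hn : ‖z - p‖^2 = ε^2 := by
          rw [← hdec z, hnormc, h1', h2', hr2]; ring
        have h3 := congrArg Real.sqrt hn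
        rwa [Real.sqrt_sq (norm_nonneg _), Real.sqrt_sq hε.le] at h3
    have hae : ∀ α β : ℂ, a (p + α • e + β • w) = α := by
      intro α β
      rw [ha_def]
      show ⟪e, (p + α • e + β • w) - p⟫_ℂ = α
      have : (p + α • e + β • w) - p = α • e + β • w := by abel
      rw [this, inner_add_right, inner_smul_right, inner_smul_right, hee, hew]
      ring
    have hbe : ∀ α β : ℂ, b (p + α • e + β • w) = β := by
      intro α β
      rw [hb_def]
      show ⟪w, (p + α • e + β • w) - p⟫_ℂ = β
      have : (p + α • e + β • w) - p = α • e + β • w := by abel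
      have hwe : ⟪w, e⟫_ℂ = 0 := by
        rw [← inner_conj_symm, hew, map_zero]
      rw [this, inner_add_right, inner_smul_right, inner_smul_right, hww, hwe]
      ring
    have hr0C : (r:ℂ) ≠ 0 := by exact_mod_cast hr0.ne'
    have hδ0C : (δ:ℂ) ≠ 0 := by exact_mod_cast hδ.ne'
    refine ⟨{
        toEquiv := {
          toFun := fun z =>
            (⟨a z.1 / (r:ℂ), mem_sphere_zero_iff_norm.2 (by
              have h := ((hS z.1).1 z.2).1
              rw [norm_div, h, Complex.norm_real, Real.norm_eq_abs, abs_of_pos hr0,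
                div_self hr0.ne'])⟩,
              ⟨b z.1 / (δ:ℂ), mem_sphere_zero_iff_norm.2 (by
                have h := ((hS z.1).1 z.2).2
                rw [norm_div, h, Complex.norm_real, Real.norm_eq_abs, abs_of_pos hδ,
                  div_self hδ.ne'])⟩),
          invFun := fun uc =>
            ⟨p + ((r:ℂ) * (uc.1 : ℂ)) • e + ((δ:ℂ) * (uc.2 : ℂ)) • w, (hS _).2 (by
              constructor
              · rw [hae, norm_mul, Complex.norm_real, Real.norm_eq_abs, abs_of_pos hr0,
                  mem_sphere_zero_iff_norm.1 uc.1.2, mul_one]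
              · rw [hbe, norm_mul, Complex.norm_real, Real.norm_eq_abs, abs_of_pos hδ,
                  mem_sphere_zero_iff_norm.1 uc.2.2, mul_one])⟩,
          left_inv := ?_,
          right_inv := ?_ },
        continuous_toFun := ?_,
        continuous_invFun := ?_ }⟩
    · intro z
      apply Subtype.ext
      show p + ((r:ℂ) * (a z.1 / (r:ℂ))) • e + ((δ:ℂ) * (b z.1 / (δ:ℂ))) • w = z.1
      rw [mul_comm ((r:ℂ)) _, div_mul_cancel₀ _ hr0C, mul_comm ((δ:ℂ)) _,
        div_mul_cancel₀ _ hδ0C, add_assoc, hdec z.1]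
      abel
    · intro uc
      apply Prod.ext
      · apply Subtype.ext
        show a (p + ((r:ℂ) * (uc.1 : ℂ)) • e + ((δ:ℂ) * (uc.2 : ℂ)) • w) / (r:ℂ) = (uc.1 : ℂ)
        rw [hae, mul_comm, mul_div_assoc, div_self hr0C, mul_one]
      · apply Subtype.ext
        show b (p + ((r:ℂ) * (uc.1 : ℂ)) • e + ((δ:ℂ) * (uc.2 : ℂ)) • w) / (δ:ℂ) = (uc.2 : ℂ)
        rw [hbe, mul_comm, mul_div_assoc, div_self hδ0C, mul_one]
    · have hca : Continuous fun z : {z : C2 | dist z p = ε ∧ Metric.infDist z L = δ} =>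
          a z.1 := by
        simp only [ha_def]
        exact Continuous.inner continuous_const (continuous_subtype_val.sub continuous_const)
      have hcb : Continuous fun z : {z : C2 | dist z p = ε ∧ Metric.infDist z L = δ} =>
          b z.1 := by
        simp only [hb_def]
        exact Continuous.inner continuous_const (continuous_subtype_val.sub continuous_const)
      exact ((hca.div_const _).subtype_mk _).prodMk ((hcb.div_const _).subtype_mk _)
    · apply Continuous.subtype_mk
      exact (continuous_const.add
        ((continuous_const.mul (continuous_subtype_val.comp continuous_fst)).smul
          continuous_const)).add
        ((continuous_const.mul (continuous_subtype_val.comp continuous_snd)).smul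
          continuous_const)
  · intro hfar
    ext z
    simp only [mem_setOf_eq, mem_empty_iff_false, iff_false, not_and]
    intro hzp hzL
    have h := Metric.infDist_le_infDist_add_dist (x := p) (y := z) (s := L)
    rw [hzL, dist_comm] at h
    rw [hzp] at h
    linarith
end
end

section
/- Let d ≥ 2, let p ∈ ℂ², and let L₁,…,L_d be distinct complex affine lines all passing through p. For all sufficiently small 0 < δ < ε, set M_p = {z ∈ ℂ² : ‖z − p‖ = ε and dist(z, Lᵢ) ≥ δ for all i} and let T₁ = {z ∈ ℂ² : ‖z − p‖ = ε and dist(z, L₁) = δ} ⊆ M_p be the boundary torus corresponding to L₁. Then for any basepoint x₀ ∈ T₁, the inclusion T₁ ↪ M_p induces an injective homomorphism π₁(T₁, x₀) → π₁(M_p, x₀). (The boundary tori of the vertex pieces are incompressible when d > 1.) -/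
open Metric Set Topology

noncomputable section

open ComplexConjugate

local notation "⟪" x ", " y "⟫" => @inner ℂ C2 _ x y

def lineThrough (p v : C2) : Set C2 := {z : C2 | ∃ t : ℂ, z = p + t • v}

lemma my_le_infDist {s : Set C2} {x : C2} {d : ℝ} (hs : s.Nonempty)
    (h : ∀ y ∈ s, d ≤ dist x y) : d ≤ Metric.infDist x s := by
  rw [Metric.infDist_eq_iInf]
  haveI := hs.to_subtype
  exact le_ciInf fun y => h y y.2

lemma line_through_unit {L : Set C2} (hL : IsComplexLine L) {p : C2} (hp : p ∈ L) :
    ∃ v : C2, ‖v‖ = 1 ∧ L = lineThrough p v := by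
  obtain ⟨p', v, hv, rfl⟩ := hL
  obtain ⟨t₀, ht₀⟩ := hp
  have hvn : (‖v‖ : ℂ) ≠ 0 := by
    simpa using (norm_ne_zero_iff.2 hv)
  refine ⟨(‖v‖ : ℂ)⁻¹ • v, ?_, ?_⟩
  · rw [norm_smul]
    simp [norm_ne_zero_iff.2 hv]
  · ext z
    constructor
    · rintro ⟨t, rfl⟩
      refine ⟨(t - t₀) * ‖v‖, ?_⟩
      rw [ht₀, smul_smul]
      rw [mul_assoc, mul_inv_cancel₀ hvn, mul_one]
      rw [sub_smul]
      abel
    · rintro ⟨t, rfl⟩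
      refine ⟨t₀ + t * (‖v‖ : ℂ)⁻¹, ?_⟩
      rw [ht₀, smul_smul, add_smul]
      abel

lemma conj_mul_self (z : ℂ) : conj z * z = ((‖z‖^2 : ℝ) : ℂ) := by
  rw [mul_comm, Complex.mul_conj]
  norm_cast
  rw [Complex.normSq_eq_norm_sq]

lemma norm_sq_eq_re (z : ℂ) : ‖z‖^2 = (z * conj z).re := by
  rw [Complex.mul_conj]
  simp [Complex.normSq_eq_norm_sq, ← Complex.ofReal_pow]

lemma cnorm_add_sq (α β : ℂ) :
    ‖α + β‖^2 = ‖α‖^2 + 2*(conj α * β).re + ‖β‖^2 := by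
  have := @norm_add_sq ℂ ℂ _ _ _ α β
  simp [RCLike.inner_apply] at this ⊢
  linear_combination this

lemma infDist_lineThrough (p v z : C2) (hv : ‖v‖ = 1) :
    Metric.infDist z (lineThrough p v) = ‖(z - p) - ⟪v, z - p⟫ • v‖ := by
  set q := z - p with hq
  have hvv : ⟪v, v⟫ = 1 := by
    rw [inner_self_eq_norm_sq_to_K, hv]; norm_num
  apply le_antisymm
  · have hmem : p + ⟪v, q⟫ • v ∈ lineThrough p v := ⟨⟪v, q⟫, rfl⟩
    have := Metric.infDist_le_dist_of_mem (x := z) hmem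
    rwa [dist_eq_norm, show z - (p + ⟪v, q⟫ • v) = q - ⟪v, q⟫ • v by rw [hq]; abel] at this
  · have hne : (lineThrough p v).Nonempty := ⟨p, 0, by simp⟩
    apply my_le_infDist hne
    rintro y ⟨t, rfl⟩
    rw [dist_eq_norm, show z - (p + t • v) = (q - ⟪v, q⟫ • v) + (⟪v, q⟫ - t) • v by
      rw [hq]; rw [sub_smul]; abel]
    have horth : ⟪q - ⟪v, q⟫ • v, (⟪v, q⟫ - t) • v⟫ = 0 := by
      rw [inner_smul_right, inner_sub_left, inner_smul_left, hvv]
      have : ⟪q, v⟫ = conj ⟪v, q⟫ := by rw [inner_conj_symm]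
      rw [this]
      ring
    have hpy := norm_add_sq_eq_norm_sq_add_norm_sq_of_inner_eq_zero _ _ horth
    nlinarith [norm_nonneg (q - ⟪v, q⟫ • v + (⟪v, q⟫ - t) • v), norm_nonneg (q - ⟪v, q⟫ • v),
      norm_nonneg ((⟪v, q⟫ - t) • v)]

lemma exists_ortho (v : C2) (hv : ‖v‖ = 1) :
    ∃ u : C2, ‖u‖ = 1 ∧ ⟪v, u⟫ = 0 ∧ ∀ q : C2, q = ⟪v, q⟫ • v + ⟪u, q⟫ • u := by
  have hv2 : ‖v 0‖^2 + ‖v 1‖^2 = 1 := by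
    have := EuclideanSpace.norm_eq v
    rw [hv] at this
    have h1 : Real.sqrt (∑ i, ‖v i‖^2) = 1 := by simpa using this.symm
    have h2 := Real.sq_sqrt (by positivity : (0:ℝ) ≤ ∑ i, ‖v i‖^2)
    rw [h1] at h2
    simpa [Fin.sum_univ_two] using h2.symm
  have hc : conj (v 0) * v 0 + conj (v 1) * v 1 = 1 := by
    rw [conj_mul_self, conj_mul_self, ← Complex.ofReal_add, hv2]
    norm_num
  refine ⟨(WithLp.equiv 2 (Fin 2 → ℂ)).symm ![-(conj (v 1)), conj (v 0)], ?_, ?_, ?_⟩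
  · rw [EuclideanSpace.norm_eq]
    simp only [Fin.sum_univ_two, WithLp.equiv_symm_apply, PiLp.toLp_apply]
    simp only [Matrix.cons_val_zero, Matrix.cons_val_one, Matrix.head_cons, norm_neg,
      RCLike.norm_conj]
    rw [show ‖v 1‖^2 + ‖v 0‖^2 = 1 by linarith]
    exact Real.sqrt_one
  · rw [PiLp.inner_apply]
    simp only [Fin.sum_univ_two, WithLp.equiv_symm_apply, PiLp.toLp_apply, RCLike.inner_apply]
    simp only [Matrix.cons_val_zero, Matrix.cons_val_one, Matrix.head_cons]
    ring
  · intro q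
    ext i
    fin_cases i <;>
      simp only [PiLp.inner_apply, Fin.sum_univ_two, WithLp.equiv_symm_apply, PiLp.toLp_apply,
        RCLike.inner_apply, PiLp.add_apply, PiLp.smul_apply, smul_eq_mul, Fin.mk_zero, Fin.mk_one,
        Fin.isValue, Matrix.cons_val_zero, Matrix.cons_val_one, Matrix.head_cons, map_neg, map_mul,
        RingHomCompTriple.comp_apply, RingHom.id_apply, Complex.conj_conj]
    · linear_combination (-(q 0)) * hc
    · linear_combination (-(q 1)) * hc

section OrthoPair

variable {v u : C2}

lemma inner_comb_left (hv : ‖v‖ = 1) (hu : ‖u‖ = 1) (hvu : ⟪v, u⟫ = 0) (x y : ℂ) : ⟪v, x • v + y • u⟫ = x := by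
  rw [inner_add_right, inner_smul_right, inner_smul_right, hvu,
    inner_self_eq_norm_sq_to_K, hv]
  push_cast
  ring

lemma inner_comb_right (hv : ‖v‖ = 1) (hu : ‖u‖ = 1) (hvu : ⟪v, u⟫ = 0) (x y : ℂ) : ⟪u, x • v + y • u⟫ = y := by
  have huv : ⟪u, v⟫ = 0 := by
    rw [← inner_conj_symm, hvu, map_zero]
  rw [inner_add_right, inner_smul_right, inner_smul_right, huv,
    inner_self_eq_norm_sq_to_K, hu]
  push_cast
  ring

lemma norm_comb_sq (hv : ‖v‖ = 1) (hu : ‖u‖ = 1) (hvu : ⟪v, u⟫ = 0) (x y : ℂ) : ‖x • v + y • u‖^2 = ‖x‖^2 + ‖y‖^2 := by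
  have horth : ⟪x • v, y • u⟫ = 0 := by
    rw [inner_smul_left, inner_smul_right, hvu]
    ring
  have h0 := norm_add_sq_eq_norm_sq_add_norm_sq_of_inner_eq_zero _ _ horth
  have h2 : ‖x • v + y • u‖^2 = (‖x‖*‖v‖)^2 + (‖y‖*‖u‖)^2 := by
    rw [pow_two, h0, norm_smul, norm_smul]; ring
  rw [h2, hv, hu]; ring

lemma infDist_comb (hv : ‖v‖ = 1) (hu : ‖u‖ = 1) (hvu : ⟪v, u⟫ = 0) (hexp : ∀ q : C2, q = ⟪v, q⟫ • v + ⟪u, q⟫ • u)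
    (p z : C2) (a b : ℂ) (hab : ‖a‖^2 + ‖b‖^2 = 1) :
    Metric.infDist z (lineThrough p (a • v + b • u)) =
      ‖b * ⟪v, z - p⟫ - a * ⟪u, z - p⟫‖ := by
  have hVn : ‖a • v + b • u‖ = 1 := by
    have := norm_comb_sq hv hu hvu a b
    rw [hab] at this
    nlinarith [norm_nonneg (a • v + b • u)]
  rw [infDist_lineThrough p _ z hVn]
  set q := z - p with hq
  set w₀ := ⟪v, q⟫ with hw₀
  set w₁ := ⟪u, q⟫ with hw₁
  have hinner : ⟪a • v + b • u, q⟫ = conj a * w₀ + conj b * w₁ := by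
    rw [inner_add_left, inner_smul_left, inner_smul_left]
  set c : ℂ := conj a * w₀ + conj b * w₁ with hc
  have hvec : q - ⟪a • v + b • u, q⟫ • (a • v + b • u)
      = (w₀ - c * a) • v + (w₁ - c * b) • u := by
    rw [hinner]
    nth_rewrite 1 [hexp q]
    rw [← hw₀, ← hw₁]
    module
  rw [hvec]
  have h1 : conj a * a + conj b * b = 1 := by
    rw [conj_mul_self, conj_mul_self, ← Complex.ofReal_add, hab]
    norm_num
  have key : (w₀ - c*a) * conj (w₀ - c*a) + (w₁ - c*b) * conj (w₁ - c*b)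
      = (b*w₀ - a*w₁) * conj (b*w₀ - a*w₁) := by
    simp only [hc, map_sub, map_add, map_mul, Complex.conj_conj]
    linear_combination ((conj a * w₀ + conj b * w₁) * (a * conj w₀ + b * conj w₁)
      - w₀ * conj w₀ - w₁ * conj w₁) * h1
  have hsq : ‖(w₀ - c*a) • v + (w₁ - c*b) • u‖^2 = ‖b*w₀ - a*w₁‖^2 := by
    rw [norm_comb_sq hv hu hvu]
    rw [norm_sq_eq_re, norm_sq_eq_re, norm_sq_eq_re, ← Complex.add_re, key]
  nlinarith [norm_nonneg ((w₀ - c*a) • v + (w₁ - c*b) • u), norm_nonneg (b*w₀ - a*w₁)]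

end OrthoPair

lemma lineThrough_smul (p v : C2) (a : ℂ) (ha : a ≠ 0) :
    lineThrough p (a • v) = lineThrough p v := by
  ext z
  constructor
  · rintro ⟨t, rfl⟩
    exact ⟨t * a, by rw [smul_smul]⟩
  · rintro ⟨t, rfl⟩
    exact ⟨t * a⁻¹, by rw [smul_smul, mul_assoc, inv_mul_cancel₀ ha, mul_one]⟩

lemma retract_homotopic {X Y : Type*} [TopologicalSpace X] [TopologicalSpace Y]
    {ι : X → Y} (hι : Continuous ι) {r : Y → X} (hr : Continuous r)
    (hret : ∀ x, r (ι x) = x) {x₀ : X} (γ γ' : Path x₀ x₀)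
    (h : (γ.map hι).Homotopic (γ'.map hι)) : γ.Homotopic γ' := by
  obtain ⟨H⟩ := h
  refine ⟨(H.compContinuousMap ⟨r, hr⟩).cast ?_ ?_⟩ <;>
  · ext s
    simp [hret]

lemma quad_aux (A B C : ℝ) (hA : 0 < A) (hD : 0 ≤ B^2 - A*C) :
    A * ((-B + Real.sqrt (B^2 - A*C))/A)^2 + 2*B*((-B + Real.sqrt (B^2 - A*C))/A) + C = 0 := by
  have hs := Real.sq_sqrt hD
  have hA' : A ≠ 0 := hA.ne'
  field_simp
  linear_combination hs

/-- the parameter of the radial projection from ζ₁ onto the circle of squared radius Rsq -/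
def ttFun (ζ₁ ζ : ℂ) (Rsq : ℝ) : ℝ :=
  (-((conj ζ₁ * (ζ - ζ₁)).re) +
      Real.sqrt ((conj ζ₁ * (ζ - ζ₁)).re^2 - ‖ζ - ζ₁‖^2 * (‖ζ₁‖^2 - Rsq))) / ‖ζ - ζ₁‖^2

/-- radial projection from ζ₁ onto the circle of squared radius Rsq -/
def sigmaFun (ζ₁ ζ : ℂ) (Rsq : ℝ) : ℂ := ζ₁ + (ttFun ζ₁ ζ Rsq : ℂ) * (ζ - ζ₁)

lemma sigma_expand (ζ₁ ζ : ℂ) (t : ℝ) :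
    ‖ζ₁ + (t:ℂ) * (ζ - ζ₁)‖^2
      = ‖ζ₁‖^2 + 2*t*(conj ζ₁ * (ζ - ζ₁)).re + t^2*‖ζ - ζ₁‖^2 := by
  have h1 := cnorm_add_sq ζ₁ ((t:ℂ) * (ζ - ζ₁))
  have h2 : (conj ζ₁ * ((t:ℂ) * (ζ - ζ₁))).re = t * (conj ζ₁ * (ζ - ζ₁)).re := by
    rw [show conj ζ₁ * ((t:ℂ) * (ζ - ζ₁)) = (t:ℂ) * (conj ζ₁ * (ζ - ζ₁)) by ring]
    rw [Complex.re_ofReal_mul]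
  have h3 : ‖(t:ℂ) * (ζ - ζ₁)‖^2 = t^2 * ‖ζ - ζ₁‖^2 := by
    rw [norm_mul, Complex.norm_real, mul_pow, Real.norm_eq_abs, sq_abs]
  rw [h1, h2, h3]
  ring

lemma sigmaFun_normsq (ζ₁ ζ : ℂ) (Rsq : ℝ) (hne : ζ ≠ ζ₁) (hC : ‖ζ₁‖^2 < Rsq) :
    ‖sigmaFun ζ₁ ζ Rsq‖^2 = Rsq := by
  have hA : 0 < ‖ζ - ζ₁‖^2 := by
    exact pow_pos (norm_pos_iff.2 (sub_ne_zero.2 hne)) 2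
  have hD : 0 ≤ (conj ζ₁ * (ζ - ζ₁)).re^2 - ‖ζ - ζ₁‖^2 * (‖ζ₁‖^2 - Rsq) := by
    nlinarith [sq_nonneg ((conj ζ₁ * (ζ - ζ₁)).re), mul_pos hA (show 0 < Rsq - ‖ζ₁‖^2 by linarith)]
  have hq := quad_aux (‖ζ - ζ₁‖^2) ((conj ζ₁ * (ζ - ζ₁)).re) (‖ζ₁‖^2 - Rsq) hA hD
  rw [sigmaFun, sigma_expand]
  rw [ttFun]
  linarith [hq]

lemma sigmaFun_id (ζ₁ ζ : ℂ) (Rsq : ℝ) (hne : ζ ≠ ζ₁) (hC : ‖ζ₁‖^2 < Rsq)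
    (hζ : ‖ζ‖^2 = Rsq) : sigmaFun ζ₁ ζ Rsq = ζ := by
  have hA : 0 < ‖ζ - ζ₁‖^2 := by
    exact pow_pos (norm_pos_iff.2 (sub_ne_zero.2 hne)) 2
  set B : ℝ := (conj ζ₁ * (ζ - ζ₁)).re with hB
  have hζ₁le : ‖ζ₁‖ ≤ ‖ζ‖ := by
    nlinarith [hC, hζ, norm_nonneg ζ, norm_nonneg ζ₁]
  have hAB : ‖ζ - ζ₁‖^2 + B = (conj ζ * (ζ - ζ₁)).re := by
    rw [hB, norm_sq_eq_re, ← Complex.add_re]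
    congr 1
    rw [map_sub]
    ring
  have hABnn : 0 ≤ ‖ζ - ζ₁‖^2 + B := by
    rw [hAB]
    have e1 : (conj ζ * ζ).re = ‖ζ‖^2 := by
      rw [norm_sq_eq_re, mul_comm]
    have e2 : (conj ζ * (ζ - ζ₁)).re = ‖ζ‖^2 - (conj ζ * ζ₁).re := by
      rw [mul_sub, Complex.sub_re, e1]
    have e3 : (conj ζ * ζ₁).re ≤ ‖ζ‖ * ‖ζ₁‖ := by
      have h4 : ‖conj ζ * ζ₁‖ = ‖ζ‖ * ‖ζ₁‖ := by
        rw [norm_mul, Complex.norm_conj]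
      have h5 := Complex.re_le_norm (conj ζ * ζ₁)
      rw [h4] at h5
      exact h5
    rw [e2]
    nlinarith [norm_nonneg ζ]
  have hquadT : ‖ζ - ζ₁‖^2 + 2*B + ‖ζ₁‖^2 = ‖ζ‖^2 := by
    have h1 := sigma_expand ζ₁ ζ 1
    rw [show ζ₁ + ((1:ℝ):ℂ) * (ζ - ζ₁) = ζ by push_cast; ring] at h1
    rw [← hB] at h1
    linarith
  have hDT : B^2 - ‖ζ - ζ₁‖^2 * (‖ζ₁‖^2 - Rsq) = (‖ζ - ζ₁‖^2 + B)^2 := by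
    linear_combination (-(‖ζ - ζ₁‖^2))*hquadT - (‖ζ - ζ₁‖^2)*hζ
  have httT : ttFun ζ₁ ζ Rsq = 1 := by
    rw [ttFun, ← hB, hDT, Real.sqrt_sq hABnn,
      show -B + (‖ζ - ζ₁‖^2 + B) = ‖ζ - ζ₁‖^2 by ring, div_self hA.ne']
  rw [sigmaFun, httT]
  push_cast
  ring

lemma sigmaFun_continuous {X : Type*} [TopologicalSpace X] (ζ₁ : ℂ) (Rsq : ℝ) {f : X → ℂ}
    (hf : Continuous f) (hne : ∀ x, f x ≠ ζ₁) :
    Continuous fun x => sigmaFun ζ₁ (f x) Rsq := by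
  have hA : ∀ x, ‖f x - ζ₁‖^2 ≠ 0 := fun x =>
    pow_ne_zero 2 (norm_ne_zero_iff.2 (sub_ne_zero.2 (hne x)))
  have cA : Continuous fun x => ‖f x - ζ₁‖^2 := ((hf.sub continuous_const).norm).pow 2
  have cB : Continuous fun x => (conj ζ₁ * (f x - ζ₁)).re :=
    Complex.continuous_re.comp (continuous_const.mul (hf.sub continuous_const))
  have cD : Continuous fun x =>
      (conj ζ₁ * (f x - ζ₁)).re^2 - ‖f x - ζ₁‖^2 * (‖ζ₁‖^2 - Rsq) :=
    (cB.pow 2).sub (cA.mul continuous_const)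
  have ct : Continuous fun x => ttFun ζ₁ (f x) Rsq := by
    unfold ttFun
    exact ((cB.neg).add (Real.continuous_sqrt.comp cD)).div cA hA
  unfold sigmaFun
  exact continuous_const.add ((Complex.continuous_ofReal.comp ct).mul
    (hf.sub continuous_const))

set_option maxHeartbeats 1600000

/-- For d ≥ 2 distinct complex affine lines through p and all
sufficiently small 0 < δ < ε, the boundary torus
T₁ = {‖z − p‖ = ε, dist(z, L₁) = δ} of the vertex piece
M_p = {‖z − p‖ = ε, dist(z, Lᵢ) ≥ δ for all i} is contained in M_p and is
incompressible: the inclusion induces an injection π₁(T₁, x₀) → π₁(M_p, x₀). -/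
theorem boundary_torus_incompressible
    (d : ℕ) (hd : 2 ≤ d) (p : C2)
    (L : Fin d → Set C2) (hL : ∀ i, IsComplexLine (L i))
    (hLinj : Function.Injective L) (hLp : ∀ i, p ∈ L i) :
    ∃ ε₀ > 0, ∀ ε ∈ Set.Ioo 0 ε₀, ∃ δ₀ ∈ Set.Ioo 0 ε, ∀ δ ∈ Set.Ioo 0 δ₀,
      ∃ hsub : {z : C2 | dist z p = ε ∧ Metric.infDist z (L ⟨0, by omega⟩) = δ} ⊆
          {z : C2 | dist z p = ε ∧ ∀ i, δ ≤ Metric.infDist z (L i)},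
        ∀ (x₀ : ↥{z : C2 | dist z p = ε ∧ Metric.infDist z (L ⟨0, by omega⟩) = δ})
          (γ γ' : Path x₀ x₀),
          (γ.map (continuous_inclusion hsub)).Homotopic
            (γ'.map (continuous_inclusion hsub)) →
          γ.Homotopic γ' := by
  have hd0 : 0 < d := by omega
  set i0 : Fin d := ⟨0, by omega⟩ with hi0
  set i1 : Fin d := ⟨1, by omega⟩ with hi1
  have hi01 : i1 ≠ i0 := by simp [hi0, hi1, Fin.ext_iff]
  choose V hVnorm hVL using fun i => line_through_unit (hL i) (hLp i)
  obtain ⟨u, hu, hvu, hexp⟩ := exists_ortho (V i0) (hVnorm i0)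
  set v : C2 := V i0 with hvdef
  have hv : ‖v‖ = 1 := hVnorm i0
  set a : Fin d → ℂ := fun i => ⟪v, V i⟫ with hadef
  set b : Fin d → ℂ := fun i => ⟪u, V i⟫ with hbdef
  have hVexp : ∀ i, V i = a i • v + b i • u := fun i => hexp (V i)
  have hab : ∀ i, ‖a i‖^2 + ‖b i‖^2 = 1 := by
    intro i
    have h1 := norm_comb_sq hv hu hvu (a i) (b i)
    rw [← hVexp i, hVnorm i] at h1
    simpa using h1.symm
  have ha0 : a i0 = 1 := by
    rw [hadef]
    simp only [← hvdef]
    rw [inner_self_eq_norm_sq_to_K, hv]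
    norm_num
  have hb0 : b i0 = 0 := by
    rw [hbdef]
    simp only [← hvdef]
    rw [← inner_conj_symm, hvu, map_zero]
  have hbne : ∀ i, i ≠ i0 → b i ≠ 0 := by
    intro i hi hbi
    have hane : a i ≠ 0 := by
      intro hai
      have := hab i
      rw [hai, hbi] at this
      simp at this
    have hLeq : L i = L i0 := by
      rw [hVL i, hVL i0, hVexp i, hbi, zero_smul, add_zero, ← hvdef,
        lineThrough_smul _ _ _ hane]
    exact hi (hLinj hLeq)
  have hdist : ∀ (z : C2) (i : Fin d),
      Metric.infDist z (L i) = ‖b i * ⟪v, z - p⟫ - a i * ⟪u, z - p⟫‖ := by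
    intro z i
    rw [hVL i, hVexp i, infDist_comb hv hu hvu hexp p z (a i) (b i) (hab i)]
  have hw1dist : ∀ z : C2, Metric.infDist z (L i0) = ‖⟪u, z - p⟫‖ := by
    intro z
    rw [hdist z i0, hb0, ha0, zero_mul, one_mul, zero_sub, norm_neg]
  have hpdist : ∀ z : C2, dist z p ^ 2 = ‖⟪v, z - p⟫‖^2 + ‖⟪u, z - p⟫‖^2 := by
    intro z
    rw [dist_eq_norm]
    nth_rewrite 1 [hexp (z - p)]
    exact norm_comb_sq hv hu hvu _ _
  -- the minimum of the ‖b i‖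
  have hSne : (Finset.univ.erase i0).Nonempty :=
    ⟨i1, Finset.mem_erase.2 ⟨hi01, Finset.mem_univ _⟩⟩
  set β : ℝ := (Finset.univ.erase i0).inf' hSne fun i => ‖b i‖ with hβdef
  have hβpos : 0 < β := by
    rw [hβdef, Finset.lt_inf'_iff]
    intro i hi
    exact norm_pos_iff.2 (hbne i (Finset.ne_of_mem_erase hi))
  have hβle : ∀ i, i ≠ i0 → β ≤ ‖b i‖ := fun i hi =>
    Finset.inf'_le _ (Finset.mem_erase.2 ⟨hi, Finset.mem_univ _⟩)
  have hb1 : b i1 ≠ 0 := hbne i1 hi01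
  have hb1pos : 0 < ‖b i1‖ := norm_pos_iff.2 hb1
  refine ⟨1, one_pos, ?_⟩
  rintro ε ⟨hε, hε1⟩
  refine ⟨min (ε/2) (min (β*ε/4) (ε*‖b i1‖/2)), ⟨by positivity, ?_⟩, ?_⟩
  · calc min (ε/2) (min (β*ε/4) (ε*‖b i1‖/2)) ≤ ε/2 := min_le_left _ _
      _ < ε := by linarith
  rintro δ ⟨hδ, hδ0⟩
  have hδε2 : δ < ε/2 := lt_of_lt_of_le hδ0 (min_le_left _ _)
  have hδβ : δ < β*ε/4 := lt_of_lt_of_le hδ0 ((min_le_right _ _).trans (min_le_left _ _))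
  have hδb1 : δ < ε*‖b i1‖/2 := lt_of_lt_of_le hδ0 ((min_le_right _ _).trans (min_le_right _ _))
  have hδε : δ < ε := by linarith
  have hsub : {z : C2 | dist z p = ε ∧ Metric.infDist z (L i0) = δ} ⊆
      {z : C2 | dist z p = ε ∧ ∀ i, δ ≤ Metric.infDist z (L i)} := by
    rintro z ⟨hz1, hz2⟩
    refine ⟨hz1, fun i => ?_⟩
    rcases eq_or_ne i i0 with rfl | hi
    · exact hz2.ge
    · rw [hdist z i]
      have hw1 : ‖⟪u, z - p⟫‖ = δ := by rw [← hw1dist z]; exact hz2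
      have hw0sq : ‖⟪v, z - p⟫‖^2 = ε^2 - δ^2 := by
        have h1 := hpdist z
        rw [hz1, hw1] at h1
        linarith
      have hw0 : ε/2 ≤ ‖⟪v, z - p⟫‖ := by
        nlinarith [norm_nonneg (⟪v, z - p⟫)]
      have hβi : β ≤ ‖b i‖ := hβle i hi
      have hai : ‖a i‖ ≤ 1 := by
        nlinarith [hab i, norm_nonneg (a i), norm_nonneg (b i)]
      have h5 : ‖b i‖*‖⟪v, z - p⟫‖ - ‖a i‖*‖⟪u, z - p⟫‖ ≤
          ‖b i * ⟪v, z - p⟫ - a i * ⟪u, z - p⟫‖ := by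
        calc ‖b i‖*‖⟪v, z - p⟫‖ - ‖a i‖*‖⟪u, z - p⟫‖
            = ‖b i * ⟪v, z - p⟫‖ - ‖a i * ⟪u, z - p⟫‖ := by rw [norm_mul, norm_mul]
          _ ≤ _ := norm_sub_norm_le _ _
      have h6 : β*(ε/2) ≤ ‖b i‖*‖⟪v, z - p⟫‖ :=
        mul_le_mul hβi hw0 (by positivity) (norm_nonneg _)
      have h7 : ‖a i‖*‖⟪u, z - p⟫‖ ≤ δ := by
        rw [hw1]
        nlinarith [norm_nonneg (⟪u, z - p⟫)]
      nlinarith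
  refine ⟨hsub, ?_⟩
  intro x₀ γ γ' hγγ'
  -- the retraction
  set ζ₁ : ℂ := a i1 / b i1 with hζ₁def
  set Rsq : ℝ := (ε^2 - δ^2)/δ^2 with hRsqdef
  have hδ2pos : (0:ℝ) < δ^2 := by positivity
  have hC : ‖ζ₁‖^2 < Rsq := by
    have h1 : ‖ζ₁‖^2 = ‖a i1‖^2/‖b i1‖^2 := by
      rw [hζ₁def, norm_div, div_pow]
    rw [h1, hRsqdef, div_lt_div_iff₀ (by positivity) hδ2pos]
    nlinarith [hab i1]
  set w₀ : C2 → ℂ := fun z => ⟪v, z - p⟫ with hw₀def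
  set w₁ : C2 → ℂ := fun z => ⟪u, z - p⟫ with hw₁def
  set ζ : C2 → ℂ := fun z => w₀ z / w₁ z with hζdef
  set φ : C2 → ℂ := fun z => w₁ z / (‖w₁ z‖ : ℂ) with hφdef
  set F : C2 → C2 := fun z =>
    p + ((δ:ℂ) * sigmaFun ζ₁ (ζ z) Rsq * φ z) • v + ((δ:ℂ) * φ z) • u with hFdef
  have hw1M : ∀ z : C2, (∀ i, δ ≤ Metric.infDist z (L i)) → δ ≤ ‖w₁ z‖ := by
    intro z hz
    have := hz i0
    rwa [hw1dist z] at this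
  have hw1ne : ∀ z : C2, (∀ i, δ ≤ Metric.infDist z (L i)) → w₁ z ≠ 0 := by
    intro z hz h0
    have := hw1M z hz
    rw [h0, norm_zero] at this
    linarith
  have hζne : ∀ z : C2, (∀ i, δ ≤ Metric.infDist z (L i)) → ζ z ≠ ζ₁ := by
    intro z hz heq
    have h2 := hz i1
    rw [hdist z i1] at h2
    simp only [hζdef, hζ₁def] at heq
    have h3 : w₀ z * b i1 = a i1 * w₁ z := (div_eq_div_iff (hw1ne z hz) hb1).1 heq
    have h4 : b i1 * w₀ z - a i1 * w₁ z = 0 := by linear_combination h3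
    simp only [hw₀def, hw₁def] at h4
    rw [h4, norm_zero] at h2
    linarith
  have hφ1 : ∀ z : C2, (∀ i, δ ≤ Metric.infDist z (L i)) → ‖φ z‖ = 1 := by
    intro z hz
    have h0 := hw1ne z hz
    simp only [hφdef]
    rw [norm_div, Complex.norm_real, Real.norm_eq_abs, abs_norm,
      div_self (norm_ne_zero_iff.2 h0)]
  have hFmem : ∀ z : C2, dist z p = ε → (∀ i, δ ≤ Metric.infDist z (L i)) →
      dist (F z) p = ε ∧ Metric.infDist (F z) (L i0) = δ := by
    intro z hz1 hz2
    have hqF : F z - p = ((δ:ℂ) * sigmaFun ζ₁ (ζ z) Rsq * φ z) • v + ((δ:ℂ) * φ z) • u := by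
      simp only [hFdef]; abel
    have hwv : ⟪v, F z - p⟫ = (δ:ℂ) * sigmaFun ζ₁ (ζ z) Rsq * φ z := by
      rw [hqF, inner_comb_left hv hu hvu]
    have hwu : ⟪u, F z - p⟫ = (δ:ℂ) * φ z := by
      rw [hqF, inner_comb_right hv hu hvu]
    have hδn : ‖(δ:ℂ)‖ = δ := by
      rw [Complex.norm_real, Real.norm_eq_abs, abs_of_pos hδ]
    have hσ' : ‖sigmaFun ζ₁ (ζ z) Rsq‖^2 * δ^2 = ε^2 - δ^2 := by
      rw [sigmaFun_normsq ζ₁ (ζ z) Rsq (hζne z hz2) hC, hRsqdef]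
      field_simp
    have hd2 : dist (F z) p ^ 2 = ε^2 := by
      rw [hpdist (F z), hwv, hwu]
      rw [norm_mul, norm_mul, norm_mul, hδn, hφ1 z hz2]
      linear_combination hσ'
    constructor
    · nlinarith [dist_nonneg (x := F z) (y := p), hd2]
    · rw [hw1dist (F z), hwu, norm_mul, hδn, hφ1 z hz2, mul_one]
  have hretr : ∀ z : C2, dist z p = ε → Metric.infDist z (L i0) = δ → F z = z := by
    intro z hz1 hz2
    have hzM : ∀ i, δ ≤ Metric.infDist z (L i) := (hsub ⟨hz1, hz2⟩).2
    have hw1nz : w₁ z ≠ 0 := hw1ne z hzM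
    have hw1n : ‖w₁ z‖ = δ := by
      simp only [hw₁def]
      rw [← hw1dist z]
      exact hz2
    have hw0sq : ‖w₀ z‖^2 = ε^2 - δ^2 := by
      have h1 := hpdist z
      rw [hz1] at h1
      have hw1n' : ‖⟪u, z - p⟫‖ = δ := by
        rw [← hw1dist z]; exact hz2
      rw [hw1n'] at h1
      simp only [hw₀def]
      linarith
    have hζsq : ‖ζ z‖^2 = Rsq := by
      simp only [hζdef]
      rw [norm_div, div_pow, hw0sq, hw1n, hRsqdef]
    have hσT : sigmaFun ζ₁ (ζ z) Rsq = ζ z := sigmaFun_id ζ₁ (ζ z) Rsq (hζne z hzM) hC hζsq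
    have hφT : φ z = w₁ z / (δ:ℂ) := by
      simp only [hφdef, hw1n]
    have hδC : ((δ:ℝ):ℂ) ≠ 0 := Complex.ofReal_ne_zero.2 hδ.ne'
    simp only [hFdef, hσT, hφT]
    have e1 : (δ:ℂ) * (w₁ z / (δ:ℂ)) = w₁ z := by field_simp
    have e2 : (δ:ℂ) * ζ z * (w₁ z / (δ:ℂ)) = w₀ z := by
      simp only [hζdef]
      field_simp
    rw [e2, e1, add_assoc]
    simp only [hw₀def, hw₁def]
    rw [← hexp (z - p)]
    abel
  -- assemble the retraction and conclude
  set TS := {z : C2 | dist z p = ε ∧ Metric.infDist z (L i0) = δ} with hTSdef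
  set MS := {z : C2 | dist z p = ε ∧ ∀ i, δ ≤ Metric.infDist z (L i)} with hMSdef
  have rmem : ∀ z : ↥MS, F z.1 ∈ TS := fun z => hFmem z.1 z.2.1 z.2.2
  have hMS2 : ∀ z : ↥MS, ∀ i, δ ≤ Metric.infDist (z.1) (L i) := fun z => z.2.2
  have cw0 : Continuous (fun z : ↥MS => w₀ z.1) := by
    simp only [hw₀def]
    exact Continuous.inner continuous_const (continuous_subtype_val.sub continuous_const)
  have cw1 : Continuous (fun z : ↥MS => w₁ z.1) := by
    simp only [hw₁def]
    exact Continuous.inner continuous_const (continuous_subtype_val.sub continuous_const)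
  have cζ : Continuous (fun z : ↥MS => ζ z.1) := by
    simp only [hζdef]
    exact cw0.div cw1 fun z => hw1ne z.1 (hMS2 z)
  have cσ : Continuous (fun z : ↥MS => sigmaFun ζ₁ (ζ z.1) Rsq) :=
    sigmaFun_continuous ζ₁ Rsq cζ fun z => hζne z.1 (hMS2 z)
  have cφ : Continuous (fun z : ↥MS => φ z.1) := by
    simp only [hφdef]
    exact cw1.div (Complex.continuous_ofReal.comp cw1.norm)
      fun z => Complex.ofReal_ne_zero.2 (norm_ne_zero_iff.2 (hw1ne z.1 (hMS2 z)))
  have cF : Continuous (fun z : ↥MS => F z.1) := by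
    simp only [hFdef]
    exact (continuous_const.add (((continuous_const.mul cσ).mul cφ).smul
      continuous_const)).add ((continuous_const.mul cφ).smul continuous_const)
  have hrcont : Continuous (fun z : ↥MS => (⟨F z.1, rmem z⟩ : ↥TS)) :=
    cF.subtype_mk rmem
  have hret : ∀ x : ↥TS, (fun z : ↥MS => (⟨F z.1, rmem z⟩ : ↥TS)) (Set.inclusion hsub x) = x := by
    intro x
    exact Subtype.ext (hretr x.1 x.2.1 x.2.2)
  exact retract_homotopic (continuous_inclusion hsub) hrcont hret γ γ' hγγ'
end
end
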